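/- Let A be a commutative local principal ideal ring of length k = 2 with finite residue field 𝐤, and let B ⊆ GL_4(A) be the invertible upper triangular matrices. Then there are at least |𝐤| distinct double cosets in B\GL_4(A)/B whose reduction modulo the maximal ideal lies in the double coset of the permutation matrix w = (1 2)(3 4) in GL_4(𝐤). -/

import Mathlib

/-!
Let `w` be the permutation matrix of `(0 1)(2 3)` and, for `t ∈ A`, let `deformW π t` be `w` with
the lower-left `2 × 2` block replaced by `π • !![1, 1; 1, t]`. It has determinant `1` and reduces
to `w`. If `b * deformW π s * c = deformW π t` with `b, c` invertible upper triangular, the entries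
of the lower-left block are all multiples of `π`, and `π * a` determines `a` modulo the maximal
ideal because `π ≠ 0`. Reducing entries `(1, 1)` and `(2, 2)` shows `c₀₁ ≡ b₂₃ ≡ 0`, and then
over the residue field the block equation becomes `b₂₂ c₀₀ = b₂₂ c₁₁ = b₃₃ c₀₀ = 1` and
`b₃₃ s c₁₁ = t`, so `s = t`: the "cross-ratio" of the block is an invariant of the double coset.
Lifting each residue class to some `t` gives the `|𝐤|` double cosets.
-/

open Matrix

/-- A matrix is invertible upper triangular. -/
def IsUT {A : Type*} [CommRing A] {n : ℕ} (M : Matrix (Fin n) (Fin n) A) : Prop :=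
  M.BlockTriangular id ∧ IsUnit M

/-- Two matrices lie in the same double coset for the subgroup of invertible
upper triangular matrices. -/
def SameDC {A : Type*} [CommRing A] {n : ℕ} (α α' : Matrix (Fin n) (Fin n) A) : Prop :=
  ∃ b c : Matrix (Fin n) (Fin n) A, IsUT b ∧ IsUT c ∧ b * α * c = α'

open IsLocalRing

section

variable {A : Type*} [CommRing A]

theorem IsUT.apply_eq_zero_of_lt {n : ℕ} {M : Matrix (Fin n) (Fin n) A} (hM : IsUT M)
    {i j : Fin n} (hij : j < i) : M i j = 0 :=
  hM.1 hij

theorem IsUT.isUnit_apply_self {n : ℕ} {M : Matrix (Fin n) (Fin n) A} (hM : IsUT M) (i : Fin n) :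
    IsUnit (M i i) := by
  have hdet := (isUnit_iff_isUnit_det M).1 hM.2
  rw [det_of_isUpperTriangular hM.1] at hdet
  exact IsUnit.prod_univ_iff.1 hdet i

theorem sameDC_refl {n : ℕ} (M : Matrix (Fin n) (Fin n) A) : SameDC M M :=
  ⟨1, 1, ⟨blockTriangular_one, isUnit_one⟩, ⟨blockTriangular_one, isUnit_one⟩, by simp⟩

theorem IsLocalRing.mk_eq_of_mul_eq_mul [IsLocalRing A] {π a b : A} (hπ : π ≠ 0)
    (h : π * a = π * b) :
    Ideal.Quotient.mk (maximalIdeal A) a = Ideal.Quotient.mk (maximalIdeal A) b := by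
  refine Ideal.Quotient.eq.2 ((mem_maximalIdeal _).2 fun hu => hπ ?_)
  exact hu.mul_left_eq_zero.1 (by rw [mul_sub, h, sub_self])

def deformW (π t : A) : Matrix (Fin 4) (Fin 4) A :=
  !![0, 1, 0, 0; 1, 0, 0, 0; π, π, 0, 1; π, π * t, 1, 0]

theorem det_deformW (π t : A) : (deformW π t).det = 1 := by
  simp [deformW, det_succ_row_zero, Fin.sum_univ_succ, Fin.succAbove]

theorem isUnit_deformW (π t : A) : IsUnit (deformW π t) := by
  rw [isUnit_iff_isUnit_det, det_deformW]
  exact isUnit_one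

theorem map_deformW {B : Type*} [CommRing B] (φ : A →+* B) {π : A} (hπ : φ π = 0) (t : A) :
    (deformW π t).map φ = !![0, 1, 0, 0; 1, 0, 0, 0; 0, 0, 0, 1; 0, 0, 1, 0] := by
  ext i j
  fin_cases i <;> fin_cases j <;> simp [deformW, hπ]

theorem mk_eq_of_sameDC_deformW [IsLocalRing A] {π : A} (hπ : π ∈ maximalIdeal A)
    (hπ0 : π ≠ 0) {s t : A} (h : SameDC (deformW π s) (deformW π t)) :
    Ideal.Quotient.mk (maximalIdeal A) s = Ideal.Quotient.mk (maximalIdeal A) t := by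
  obtain ⟨b, c, hb, hc, hbc⟩ := h
  have entry (i j : Fin 4) : (b * deformW π s * c) i j = deformW π t i j := by rw [hbc]
  have e11 := entry 1 1
  have e22 := entry 2 2
  have e20 := entry 2 0
  have e21 := entry 2 1
  have e30 := entry 3 0
  have e31 := entry 3 1
  simp only [deformW, Fin.isValue, mul_apply, of_apply, cons_val', cons_val_fin_one,
    Fin.sum_univ_four, zero_lt_one, hb.apply_eq_zero_of_lt, cons_val_zero, zero_mul, cons_val_one,
    zero_add, cons_val, mul_one, mul_zero, add_zero, Fin.reduceLT, hc.apply_eq_zero_of_lt]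
    at e11 e22 e20 e21 e30 e31
  have r20 := mk_eq_of_mul_eq_mul hπ0 (a := (b 2 2 + b 2 3) * c 0 0) (b := 1)
    (by linear_combination e20)
  have r21 := mk_eq_of_mul_eq_mul hπ0
    (a := (b 2 2 + b 2 3) * c 0 1 + (b 2 2 + b 2 3 * s) * c 1 1) (b := 1)
    (by linear_combination e21)
  have r30 := mk_eq_of_mul_eq_mul hπ0 (a := b 3 3 * c 0 0) (b := 1)
    (by linear_combination e30)
  have r31 := mk_eq_of_mul_eq_mul hπ0 (a := b 3 3 * (c 0 1 + s * c 1 1)) (b := t)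
    (by linear_combination e31)
  set ψ := Ideal.Quotient.mk (maximalIdeal A)
  have hψπ : ψ π = 0 := Ideal.Quotient.eq_zero_iff_mem.2 hπ
  have hc01 : ψ (c 0 1) = 0 := by
    have := congrArg ψ e11
    simp only [map_add, map_mul, hψπ, map_zero, mul_zero, add_zero, zero_mul] at this
    exact ((hb.isUnit_apply_self 1).map ψ).mul_right_eq_zero.1 this
  have hb23 : ψ (b 2 3) = 0 := by
    have := congrArg ψ e22
    simp only [map_add, map_mul, hψπ, map_zero, mul_zero, add_zero, zero_mul, zero_add] at this
    exact ((hc.isUnit_apply_self 2).map ψ).mul_left_eq_zero.1 this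
  simp only [map_add, map_mul, map_one, hc01, hb23, add_zero, zero_add, zero_mul]
    at r20 r21 r30 r31
  linear_combination r31 - ψ s * r30 + ψ s * ψ (b 3 3) * (ψ (c 1 1) * r20 - ψ (c 0 0) * r21)

end

theorem stmt10_general {A : Type*} [CommRing A] [IsLocalRing A]
    (π : A) (hmax : IsLocalRing.maximalIdeal A = Ideal.span {π})
    (h1 : π ≠ 0) :
    ∃ f : (A ⧸ IsLocalRing.maximalIdeal A) → Matrix (Fin 4) (Fin 4) A,
      (∀ x, IsUnit (f x)) ∧
      (∀ x, SameDC ((f x).map (Ideal.Quotient.mk (IsLocalRing.maximalIdeal A)))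
          !![0, 1, 0, 0; 1, 0, 0, 0; 0, 0, 0, 1; 0, 0, 1, 0]) ∧
      (∀ x y, SameDC (f x) (f y) → x = y) := by
  have hπ : π ∈ maximalIdeal A := hmax ▸ Ideal.mem_span_singleton_self π
  have hlift := Function.surjInv_eq (Ideal.Quotient.mk_surjective (I := maximalIdeal A))
  refine ⟨fun x => deformW π (Function.surjInv Ideal.Quotient.mk_surjective x),
    fun x => isUnit_deformW _ _, fun x => ?_, fun x y hxy => ?_⟩
  · rw [map_deformW _ (Ideal.Quotient.eq_zero_iff_mem.2 hπ)]
    exact sameDC_refl _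
  · have := mk_eq_of_sameDC_deformW hπ h1 hxy
    rwa [hlift, hlift] at this

theorem stmt10 {A : Type*} [CommRing A] [IsLocalRing A] [IsPrincipalIdealRing A]
    (π : A) (hmax : IsLocalRing.maximalIdeal A = Ideal.span {π})
    (h2 : π ^ 2 = 0) (h1 : π ≠ 0)
    [Finite (A ⧸ IsLocalRing.maximalIdeal A)] :
    ∃ f : (A ⧸ IsLocalRing.maximalIdeal A) → Matrix (Fin 4) (Fin 4) A,
      (∀ x, IsUnit (f x)) ∧
      (∀ x, SameDC ((f x).map (Ideal.Quotient.mk (IsLocalRing.maximalIdeal A)))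
          !![0, 1, 0, 0; 1, 0, 0, 0; 0, 0, 0, 1; 0, 0, 1, 0]) ∧
      (∀ x y, SameDC (f x) (f y) → x = y) :=
  stmt10_general π hmax h1
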